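/- Closed-form for the minimum of a cycle: if a is a positive odd integer with f^k(a) = a and n_i = v_2(3 f^{i-1}(a)+1), then a · (2^{n_1+...+n_k} − 3^k) = \sum_{j=0}^{k-1} 3^{k-1-j} 2^{n_1+...+n_j} (empty exponent sum equals 0 for j = 0). -/

import Mathlib

/-- Shortcut Collatz map on odd integers: f(a) = (3a+1)/2^(v2(3a+1)). -/
def collatzOdd (a : ℤ) : ℤ := (3 * a + 1) / 2 ^ ((3 * a + 1).natAbs.factorization 2)

/-- n (a) i = v2(3 * f^[i](a) + 1), i.e. the exponent n_{i+1} in the paper. -/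
def collatzExp (a : ℤ) (i : ℕ) : ℕ :=
  (3 * collatzOdd^[i] a + 1).natAbs.factorization 2

/-!
Each step of the map satisfies `2 ^ v₂(3x + 1) * f x = 3x + 1`, since `f x` is an exact quotient.
Iterating this affine relation expresses `2 ^ (n₁ + ⋯ + nⱼ) * f^[j] a` as `3 ^ j * a` plus the sum
of the accumulated `+1` terms, each multiplied by the later factors of `3`; at `j = k` the
cycle condition `f^[k] a = a` turns this into the closed form.
-/

theorem two_pow_mul_collatzOdd (x : ℤ) :
    2 ^ ((3 * x + 1).natAbs.factorization 2) * collatzOdd x = 3 * x + 1 := by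
  have hdvd : (2 : ℤ) ^ ((3 * x + 1).natAbs.factorization 2) ∣ 3 * x + 1 := by
    exact_mod_cast Int.natCast_dvd.mpr (Nat.ordProj_dvd (3 * x + 1).natAbs 2)
  exact Int.mul_ediv_cancel' hdvd

theorem two_pow_sum_collatzExp_mul_iterate (a : ℤ) (j : ℕ) :
    2 ^ (∑ i ∈ Finset.range j, collatzExp a i) * collatzOdd^[j] a =
      3 ^ j * a + ∑ i ∈ Finset.range j,
        3 ^ (j - 1 - i) * 2 ^ (∑ t ∈ Finset.range i, collatzExp a t) := by
  induction j with
  | zero => simp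
  | succ j ih =>
    have hstep : (2 : ℤ) ^ collatzExp a j * collatzOdd^[j + 1] a = 3 * collatzOdd^[j] a + 1 := by
      rw [Function.iterate_succ_apply']
      exact two_pow_mul_collatzOdd _
    have hshift : ∑ i ∈ Finset.range j,
          (3 : ℤ) ^ (j - i) * 2 ^ (∑ t ∈ Finset.range i, collatzExp a t) =
        3 * ∑ i ∈ Finset.range j,
          3 ^ (j - 1 - i) * 2 ^ (∑ t ∈ Finset.range i, collatzExp a t) := by
      rw [Finset.mul_sum]
      refine Finset.sum_congr rfl fun i hi => ?_
      rw [show j - i = j - 1 - i + 1 by have := Finset.mem_range.mp hi; omega, pow_succ]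
      ring
    calc (2 : ℤ) ^ (∑ i ∈ Finset.range (j + 1), collatzExp a i) * collatzOdd^[j + 1] a
        = 2 ^ (∑ i ∈ Finset.range j, collatzExp a i) * (3 * collatzOdd^[j] a + 1) := by
          rw [Finset.sum_range_succ, pow_add, mul_assoc, hstep]
      _ = 3 ^ (j + 1) * a + ∑ i ∈ Finset.range (j + 1),
            3 ^ (j + 1 - 1 - i) * 2 ^ (∑ t ∈ Finset.range i, collatzExp a t) := by
          rw [Finset.sum_range_succ, Nat.add_sub_cancel, Nat.sub_self, hshift]
          linear_combination 3 * ih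

theorem collatzOdd_cycle_closed_form_general (a : ℤ) (k : ℕ)
    (hcyc : collatzOdd^[k] a = a) :
    a * ((2 : ℤ) ^ (∑ i ∈ Finset.range k, collatzExp a i) - 3 ^ k) =
      ∑ j ∈ Finset.range k,
        3 ^ (k - 1 - j) * 2 ^ (∑ i ∈ Finset.range j, collatzExp a i) := by
  have h := two_pow_sum_collatzExp_mul_iterate a k
  rw [hcyc] at h
  linear_combination h

theorem collatzOdd_cycle_closed_form (a : ℤ) (ha : Odd a) (hpos : 0 < a) (k : ℕ) (hk : 1 ≤ k)
    (hcyc : collatzOdd^[k] a = a) :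
    a * ((2 : ℤ) ^ (∑ i ∈ Finset.range k, collatzExp a i) - 3 ^ k) =
      ∑ j ∈ Finset.range k,
        3 ^ (k - 1 - j) * 2 ^ (∑ i ∈ Finset.range j, collatzExp a i) :=
  collatzOdd_cycle_closed_form_general a k hcyc
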